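/- Let α_k (1 ≤ k ≤ N) and β_{kl} (1 ≤ k < l ≤ N) be real numbers with ω_k·β_{kl} = 0 and ω_l·β_{kl} = 0, and let χ_{α,β} be the alternating bilinear form on su_ω(N+1) that vanishes on every pair of distinct basis elements except χ_{α,β}(J_{ab},M_{ab}) = Σ_{s=a+1}^{b} ω_{a,s−1}ω_{s,b}·α_s and χ_{α,β}(B_k,B_l) = β_{kl}. Then χ_{α,β} is a 2-coboundary if and only if β_{kl} = 0 for all 1 ≤ k < l ≤ N and α_k = 0 for every k with ω_k = 0. -/

import Mathlib

open Finset

noncomputable section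

/-- `ckW ω a b` is the product `ω_{ab} = ω_{a+1} ω_{a+2} ⋯ ω_b` (so `ckW ω a a = 1`). -/
def ckW (ω : ℕ → ℝ) (a b : ℕ) : ℝ := ∏ s ∈ Finset.Icc (a + 1) b, ω s

/-- `ckKappa a b l = δ_{a,l-1} − δ_{b,l-1} + δ_{b,l} − δ_{a,l}`. -/
def ckKappa (a b l : ℕ) : ℝ :=
  (if a = l - 1 then (1 : ℝ) else 0) - (if b = l - 1 then (1 : ℝ) else 0)
    + (if b = l then (1 : ℝ) else 0) - (if a = l then (1 : ℝ) else 0)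

/-- A 2-cocycle on a real Lie algebra: an alternating bilinear form satisfying the
cocycle identity. -/
def IsLieCocycle {L : Type*} [LieRing L] [LieAlgebra ℝ L]
    (ξ : L →ₗ[ℝ] L →ₗ[ℝ] ℝ) : Prop :=
  (∀ x, ξ x x = 0) ∧ ∀ x y z, ξ ⁅x, y⁆ z + ξ ⁅y, z⁆ x + ξ ⁅z, x⁆ y = 0

/-- A 2-coboundary on a real Lie algebra: the bilinear form `(x, y) ↦ μ ⁅x, y⁆` for a
linear functional `μ`. -/
def IsLieCoboundary {L : Type*} [LieRing L] [LieAlgebra ℝ L]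
    (ξ : L →ₗ[ℝ] L →ₗ[ℝ] ℝ) : Prop :=
  ∃ μ : L →ₗ[ℝ] ℝ, ∀ x y, ξ x y = μ ⁅x, y⁆

/-- The commutation relations of the special unitary Cayley–Klein algebra `su_ω(N+1)`
for the generating family `J, M, B`. -/
structure SUBrackets {L : Type*} [LieRing L] [LieAlgebra ℝ L] (N : ℕ) (ω : ℕ → ℝ)
    (J M : ℕ → ℕ → L) (B : ℕ → L) : Prop where
  jj_left : ∀ a b c, a < b → b < c → c ≤ N → ⁅J a b, J a c⁆ = ckW ω a b • J b c
  jj_mid : ∀ a b c, a < b → b < c → c ≤ N → ⁅J a b, J b c⁆ = -(J a c)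
  jj_right : ∀ a b c, a < b → b < c → c ≤ N → ⁅J a c, J b c⁆ = ckW ω b c • J a b
  mm_left : ∀ a b c, a < b → b < c → c ≤ N → ⁅M a b, M a c⁆ = ckW ω a b • J b c
  mm_mid : ∀ a b c, a < b → b < c → c ≤ N → ⁅M a b, M b c⁆ = J a c
  mm_right : ∀ a b c, a < b → b < c → c ≤ N → ⁅M a c, M b c⁆ = ckW ω b c • J a b
  jm_left : ∀ a b c, a < b → b < c → c ≤ N → ⁅J a b, M a c⁆ = ckW ω a b • M b c
  jm_mid : ∀ a b c, a < b → b < c → c ≤ N → ⁅J a b, M b c⁆ = -(M a c)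
  jm_right : ∀ a b c, a < b → b < c → c ≤ N → ⁅J a c, M b c⁆ = -(ckW ω b c • M a b)
  mj_left : ∀ a b c, a < b → b < c → c ≤ N → ⁅M a b, J a c⁆ = -(ckW ω a b • M b c)
  mj_mid : ∀ a b c, a < b → b < c → c ≤ N → ⁅M a b, J b c⁆ = -(M a c)
  mj_right : ∀ a b c, a < b → b < c → c ≤ N → ⁅M a c, J b c⁆ = ckW ω b c • M a b
  jj_disj : ∀ a b d e, a < b → b ≤ N → d < e → e ≤ N →
    a ≠ d → a ≠ e → b ≠ d → b ≠ e → ⁅J a b, J d e⁆ = 0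
  mm_disj : ∀ a b d e, a < b → b ≤ N → d < e → e ≤ N →
    a ≠ d → a ≠ e → b ≠ d → b ≠ e → ⁅M a b, M d e⁆ = 0
  jm_disj : ∀ a b d e, a < b → b ≤ N → d < e → e ≤ N →
    a ≠ d → a ≠ e → b ≠ d → b ≠ e → ⁅J a b, M d e⁆ = 0
  jb : ∀ a b l, a < b → b ≤ N → 1 ≤ l → l ≤ N → ⁅J a b, B l⁆ = ckKappa a b l • M a b
  mb : ∀ a b l, a < b → b ≤ N → 1 ≤ l → l ≤ N → ⁅M a b, B l⁆ = -(ckKappa a b l • J a b)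
  jm_same : ∀ a b, a < b → b ≤ N →
    ⁅J a b, M a b⁆ = (-(2 * ckW ω a b)) • ∑ s ∈ Finset.Icc (a + 1) b, B s
  bb : ∀ k l, 1 ≤ k → k < l → l ≤ N → ⁅B k, B l⁆ = 0

/-- Index predicate for the basis of `su_ω(N+1)`. -/
def suIdxP (N : ℕ) : (ℕ × ℕ) ⊕ ((ℕ × ℕ) ⊕ ℕ) → Prop
  | Sum.inl (a, b) => a < b ∧ b ≤ N
  | Sum.inr (Sum.inl (a, b)) => a < b ∧ b ≤ N
  | Sum.inr (Sum.inr l) => 1 ≤ l ∧ l ≤ N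

/-- Index type for the basis of `su_ω(N+1)`. -/
def SUIdx (N : ℕ) : Type := {x // suIdxP N x}

/-- The basis family `{J_{ab}} ∪ {M_{ab}} ∪ {B_l}` of `su_ω(N+1)`. -/
def suFam {L : Type*} (N : ℕ) (J M : ℕ → ℕ → L) (B : ℕ → L) : SUIdx N → L :=
  fun x =>
    match x.1 with
    | Sum.inl (a, b) => J a b
    | Sum.inr (Sum.inl (a, b)) => M a b
    | Sum.inr (Sum.inr l) => B l

/-- The family `{J_{ab}} ∪ {M_{ab}} ∪ {B_l}` is a basis of `L`. -/
def SUBasis {L : Type*} [LieRing L] [LieAlgebra ℝ L] (N : ℕ)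
    (J M : ℕ → ℕ → L) (B : ℕ → L) : Prop :=
  LinearIndependent ℝ (suFam N J M B) ∧
    ⊤ ≤ Submodule.span ℝ (Set.range (suFam N J M B))

/-- The extra central generator `I` of `u_ω(N+1)` commutes with everything. -/
structure UCentral {L : Type*} [LieRing L] [LieAlgebra ℝ L] (N : ℕ)
    (J M : ℕ → ℕ → L) (B : ℕ → L) (I : L) : Prop where
  jcen : ∀ a b, a < b → b ≤ N → ⁅J a b, I⁆ = 0
  mcen : ∀ a b, a < b → b ≤ N → ⁅M a b, I⁆ = 0
  bcen : ∀ l, 1 ≤ l → l ≤ N → ⁅B l, I⁆ = 0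

/-- Index type for the basis of `u_ω(N+1)`. -/
def UIdx (N : ℕ) : Type := SUIdx N ⊕ Unit

/-- The basis family `{J_{ab}} ∪ {M_{ab}} ∪ {B_l} ∪ {I}` of `u_ω(N+1)`. -/
def uFam {L : Type*} (N : ℕ) (J M : ℕ → ℕ → L) (B : ℕ → L) (I : L) : UIdx N → L :=
  Sum.elim (suFam N J M B) fun _ => I

/-- The family `{J_{ab}} ∪ {M_{ab}} ∪ {B_l} ∪ {I}` is a basis of `L`. -/
def UBasis {L : Type*} [LieRing L] [LieAlgebra ℝ L] (N : ℕ)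
    (J M : ℕ → ℕ → L) (B : ℕ → L) (I : L) : Prop :=
  LinearIndependent ℝ (uFam N J M B I) ∧
    ⊤ ≤ Submodule.span ℝ (Set.range (uFam N J M B I))

/- Auxiliary lemmas -/

lemma ckW_self' (ω : ℕ → ℝ) (a : ℕ) : ckW ω a a = 1 := by simp [ckW]

lemma ckW_succ' (ω : ℕ → ℝ) (k : ℕ) (hk : 1 ≤ k) : ckW ω (k-1) k = ω k := by
  have h : k - 1 + 1 = k := by omega
  simp [ckW, h]

lemma ckW_factor' (ω : ℕ → ℝ) (a s b : ℕ) (h1 : a + 1 ≤ s) (h2 : s ≤ b) :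
    ckW ω a b = ckW ω a (s-1) * (ω s * ckW ω s b) := by
  unfold ckW
  rw [Finset.Icc_add_one_left_eq_Ioc, Finset.Icc_add_one_left_eq_Ioc, Finset.Icc_add_one_left_eq_Ioc]
  have e1 : Finset.Ioc (s-1) s = {s} := by ext x; simp [Finset.mem_Ioc]; omega
  rw [← Finset.prod_Ioc_consecutive ω (by omega : a ≤ s-1) (by omega : s-1 ≤ b),
      ← Finset.prod_Ioc_consecutive ω (by omega : s-1 ≤ s) h2, e1,
      Finset.prod_singleton]

theorem su_reduced_coboundary_iff {L : Type*} [LieRing L] [LieAlgebra ℝ L]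
    (N : ℕ) (hN : 1 ≤ N) (ω : ℕ → ℝ) (J M : ℕ → ℕ → L) (B : ℕ → L)
    (hbr : SUBrackets N ω J M B) (hbasis : SUBasis N J M B)
    (α : ℕ → ℝ) (β : ℕ → ℕ → ℝ)
    (hβ : (∀ k l, 1 ≤ k → k < l → l ≤ N → ω k * β k l = 0 ∧ ω l * β k l = 0))
    (χ : L →ₗ[ℝ] L →ₗ[ℝ] ℝ) (halt : ∀ x, χ x x = 0)
    (hval : (∀ a b d e, a < b → b ≤ N → d < e → e ≤ N → (a, b) ≠ (d, e) →
        χ (J a b) (J d e) = 0 ∧ χ (M a b) (M d e) = 0 ∧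
        χ (J a b) (M d e) = 0 ∧ χ (M a b) (J d e) = 0) ∧
      (∀ a b l, a < b → b ≤ N → 1 ≤ l → l ≤ N →
        χ (J a b) (B l) = 0 ∧ χ (M a b) (B l) = 0) ∧
      (∀ a b, a < b → b ≤ N →
        χ (J a b) (M a b) = ∑ s ∈ Finset.Icc (a + 1) b, ckW ω a (s - 1) * ckW ω s b * α s) ∧
      (∀ k l, 1 ≤ k → k < l → l ≤ N → χ (B k) (B l) = β k l)) :
    IsLieCoboundary χ ↔
      ((∀ k l, 1 ≤ k → k < l → l ≤ N → β k l = 0) ∧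
        (∀ k, 1 ≤ k → k ≤ N → ω k = 0 → α k = 0)) := by
  classical
  obtain ⟨hLI, hspan⟩ := hbasis
  obtain ⟨hJJ, hJB, hJMsame, hBB⟩ := hval
  constructor
  · rintro ⟨μ, hμ⟩
    constructor
    · intro k l hk hkl hlN
      have h := hμ (B k) (B l)
      rw [hbr.bb k l hk hkl hlN, map_zero] at h
      rw [← hBB k l hk hkl hlN]; exact h
    · intro k hk1 hkN hωk
      have hkk : k - 1 < k := by omega
      have hsum := hJMsame (k-1) k hkk hkN
      have hIcc : Finset.Icc (k-1+1) k = {k} := by ext x; simp [Finset.mem_Icc]; omega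
      rw [hIcc, Finset.sum_singleton, ckW_self', ckW_self', one_mul, one_mul] at hsum
      have h2 := hμ (J (k-1) k) (M (k-1) k)
      rw [hbr.jm_same (k-1) k hkk hkN, ckW_succ' ω k hk1, hωk] at h2
      simp only [mul_zero, neg_zero, zero_smul, map_zero] at h2
      rw [← hsum]; exact h2
  · rintro ⟨hβ0, hα0⟩
    let bas : Module.Basis (SUIdx N) ℝ L := Module.Basis.mk hLI hspan
    have hbas : ∀ i, bas i = suFam N J M B i := fun i => Module.Basis.mk_apply hLI hspan i
    set c : ℕ → ℝ := fun s => if ω s = 0 then 0 else -(α s) / (2 * ω s) with hc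
    let v : SUIdx N → ℝ := fun i =>
      match i with
      | ⟨Sum.inl _, _⟩ => 0
      | ⟨Sum.inr (Sum.inl _), _⟩ => 0
      | ⟨Sum.inr (Sum.inr l), _⟩ => c l
    let μ : L →ₗ[ℝ] ℝ := bas.constr ℝ v
    have hμJ : ∀ a b, a < b → b ≤ N → μ (J a b) = 0 := by
      intro a b h1 h2
      have e : J a b = bas ⟨Sum.inl (a,b), ⟨h1,h2⟩⟩ := by exact (hbas ⟨Sum.inl (a,b), ⟨h1,h2⟩⟩).symm
      rw [e]; exact Module.Basis.constr_basis bas ℝ v _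
    have hμM : ∀ a b, a < b → b ≤ N → μ (M a b) = 0 := by
      intro a b h1 h2
      have e : M a b = bas ⟨Sum.inr (Sum.inl (a,b)), ⟨h1,h2⟩⟩ := by exact (hbas ⟨Sum.inr (Sum.inl (a,b)), ⟨h1,h2⟩⟩).symm
      rw [e]; exact Module.Basis.constr_basis bas ℝ v _
    have hμB : ∀ l, 1 ≤ l → l ≤ N → μ (B l) = c l := by
      intro l h1 h2
      have e : B l = bas ⟨Sum.inr (Sum.inr l), ⟨h1,h2⟩⟩ := by exact (hbas ⟨Sum.inr (Sum.inr l), ⟨h1,h2⟩⟩).symm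
      rw [e]; exact Module.Basis.constr_basis bas ℝ v _
    -- bracket values under μ
    have hμJJ : ∀ a b d e, a < b → b ≤ N → d < e → e ≤ N → μ ⁅J a b, J d e⁆ = 0 := by
      intro a b d e hab hbN hde heN
      by_cases h1 : a = d
      · subst h1
        rcases lt_trichotomy b e with h | h | h
        · rw [hbr.jj_left a b e hab h heN, map_smul, hμJ b e h heN, smul_eq_mul, mul_zero]
        · subst h; rw [lie_self, map_zero]
        · rw [← lie_skew, hbr.jj_left a e b hde h hbN, map_neg, map_smul,
            hμJ e b h hbN, smul_eq_mul, mul_zero, neg_zero]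
      · by_cases h2 : b = d
        · subst h2
          rw [hbr.jj_mid a b e hab hde heN, map_neg, hμJ a e (by omega) heN, neg_zero]
        · by_cases h3 : a = e
          · subst h3
            rw [← lie_skew, hbr.jj_mid d a b hde hab hbN, map_neg, map_neg,
              hμJ d b (by omega) hbN, neg_zero, neg_zero]
          · by_cases h4 : b = e
            · subst h4
              rcases lt_trichotomy a d with h | h | h
              · rw [hbr.jj_right a d b h hde hbN, map_smul, hμJ a d h (by omega),
                  smul_eq_mul, mul_zero]
              · exact absurd h h1
              · rw [← lie_skew, hbr.jj_right d a b h hab hbN, map_neg, map_smul,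
                  hμJ d a h (by omega), smul_eq_mul, mul_zero, neg_zero]
            · rw [hbr.jj_disj a b d e hab hbN hde heN h1 h3 h2 h4, map_zero]
    have hμMM : ∀ a b d e, a < b → b ≤ N → d < e → e ≤ N → μ ⁅M a b, M d e⁆ = 0 := by
      intro a b d e hab hbN hde heN
      by_cases h1 : a = d
      · subst h1
        rcases lt_trichotomy b e with h | h | h
        · rw [hbr.mm_left a b e hab h heN, map_smul, hμJ b e h heN, smul_eq_mul, mul_zero]
        · subst h; rw [lie_self, map_zero]
        · rw [← lie_skew, hbr.mm_left a e b hde h hbN, map_neg, map_smul,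
            hμJ e b h hbN, smul_eq_mul, mul_zero, neg_zero]
      · by_cases h2 : b = d
        · subst h2
          rw [hbr.mm_mid a b e hab hde heN, hμJ a e (by omega) heN]
        · by_cases h3 : a = e
          · subst h3
            rw [← lie_skew, hbr.mm_mid d a b hde hab hbN, map_neg, hμJ d b (by omega) hbN, neg_zero]
          · by_cases h4 : b = e
            · subst h4
              rcases lt_trichotomy a d with h | h | h
              · rw [hbr.mm_right a d b h hde hbN, map_smul, hμJ a d h (by omega),
                  smul_eq_mul, mul_zero]
              · exact absurd h h1
              · rw [← lie_skew, hbr.mm_right d a b h hab hbN, map_neg, map_smul,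
                  hμJ d a h (by omega), smul_eq_mul, mul_zero, neg_zero]
            · rw [hbr.mm_disj a b d e hab hbN hde heN h1 h3 h2 h4, map_zero]
    have hμJM : ∀ a b d e, a < b → b ≤ N → d < e → e ≤ N → (a, b) ≠ (d, e) →
        μ ⁅J a b, M d e⁆ = 0 := by
      intro a b d e hab hbN hde heN hne
      by_cases h1 : a = d
      · subst h1
        rcases lt_trichotomy b e with h | h | h
        · rw [hbr.jm_left a b e hab h heN, map_smul, hμM b e h heN, smul_eq_mul, mul_zero]
        · exact absurd (by rw [h]) hne
        · rw [← lie_skew, hbr.mj_left a e b hde h hbN, map_neg, map_neg, map_smul,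
            hμM e b h hbN, smul_eq_mul, mul_zero, neg_zero, neg_zero]
      · by_cases h2 : b = d
        · subst h2
          rw [hbr.jm_mid a b e hab hde heN, map_neg, hμM a e (by omega) heN, neg_zero]
        · by_cases h3 : a = e
          · subst h3
            rw [← lie_skew, hbr.mj_mid d a b hde hab hbN, map_neg, map_neg,
              hμM d b (by omega) hbN, neg_zero, neg_zero]
          · by_cases h4 : b = e
            · subst h4
              rcases lt_trichotomy a d with h | h | h
              · rw [hbr.jm_right a d b h hde hbN, map_neg, map_smul, hμM a d h (by omega),
                  smul_eq_mul, mul_zero, neg_zero]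
              · exact absurd h h1
              · rw [← lie_skew, hbr.mj_right d a b h hab hbN, map_neg, map_smul,
                  hμM d a h (by omega), smul_eq_mul, mul_zero, neg_zero]
            · rw [hbr.jm_disj a b d e hab hbN hde heN h1 h3 h2 h4, map_zero]
    have hμJB : ∀ a b l, a < b → b ≤ N → 1 ≤ l → l ≤ N → μ ⁅J a b, B l⁆ = 0 := by
      intro a b l h1 h2 h3 h4
      rw [hbr.jb a b l h1 h2 h3 h4, map_smul, hμM a b h1 h2, smul_eq_mul, mul_zero]
    have hμMB : ∀ a b l, a < b → b ≤ N → 1 ≤ l → l ≤ N → μ ⁅M a b, B l⁆ = 0 := by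
      intro a b l h1 h2 h3 h4
      rw [hbr.mb a b l h1 h2 h3 h4, map_neg, map_smul, hμJ a b h1 h2,
        smul_eq_mul, mul_zero, neg_zero]
    have hμJMs : ∀ a b, a < b → b ≤ N →
        μ ⁅J a b, M a b⁆ = ∑ s ∈ Finset.Icc (a + 1) b, ckW ω a (s - 1) * ckW ω s b * α s := by
      intro a b hab hbN
      rw [hbr.jm_same a b hab hbN, map_smul, smul_eq_mul, map_sum]
      have hterm : ∀ s ∈ Finset.Icc (a+1) b, μ (B s) = c s := by
        intro s hs
        rw [Finset.mem_Icc] at hs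
        exact hμB s (by omega) (by omega)
      rw [Finset.sum_congr rfl hterm, Finset.mul_sum]
      refine Finset.sum_congr rfl ?_
      intro s hs
      rw [Finset.mem_Icc] at hs
      rw [ckW_factor' ω a s b hs.1 hs.2]
      by_cases hω : ω s = 0
      · have hα : α s = 0 := hα0 s (by omega) (by omega) hω
        rw [if_pos hω, hα]
        ring
      · rw [if_neg hω]
        field_simp
    -- skew-symmetry of χ
    have hχskew : ∀ x y : L, χ y x = -χ x y := by
      intro x y
      have h := halt (x + y)
      simp only [map_add, LinearMap.add_apply, halt x, halt y] at h
      linarith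
    -- the coboundary bilinear form
    let Φ : L →ₗ[ℝ] L →ₗ[ℝ] ℝ := LinearMap.mk₂ ℝ (fun x y => μ ⁅x, y⁆)
      (fun x x' y => by simp only [add_lie, map_add])
      (fun r x y => by simp only [smul_lie, map_smul])
      (fun x y y' => by simp only [lie_add, map_add])
      (fun r x y => by simp only [lie_smul, map_smul])
    have hpair : ∀ i j : SUIdx N, χ (bas i) (bas j) = Φ (bas i) (bas j) := by
      intro i j
      rw [hbas i, hbas j]
      obtain ⟨vi, hi⟩ := i
      obtain ⟨vj, hj⟩ := j
      rcases vi with ⟨a, b⟩ | ⟨a, b⟩ | k <;> rcases vj with ⟨d, e⟩ | ⟨d, e⟩ | l <;>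
        simp only [suFam, LinearMap.mk₂_apply, Φ]
      · -- J J
        obtain ⟨hab, hbN⟩ := hi; obtain ⟨hde, heN⟩ := hj
        by_cases hpq : a = d ∧ b = e
        · obtain ⟨rfl, rfl⟩ := hpq
          rw [halt, lie_self, map_zero]
        · have hne : (a, b) ≠ (d, e) := by
            intro hcon
            exact hpq ⟨congrArg Prod.fst hcon, congrArg Prod.snd hcon⟩
          rw [(hJJ a b d e hab hbN hde heN hne).1, hμJJ a b d e hab hbN hde heN]
      · -- J M
        obtain ⟨hab, hbN⟩ := hi; obtain ⟨hde, heN⟩ := hj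
        by_cases hpq : a = d ∧ b = e
        · obtain ⟨rfl, rfl⟩ := hpq
          rw [hJMsame a b hab hbN, hμJMs a b hab hbN]
        · have hne : (a, b) ≠ (d, e) := by
            intro hcon
            exact hpq ⟨congrArg Prod.fst hcon, congrArg Prod.snd hcon⟩
          rw [(hJJ a b d e hab hbN hde heN hne).2.2.1, hμJM a b d e hab hbN hde heN hne]
      · -- J B
        obtain ⟨hab, hbN⟩ := hi; obtain ⟨hl1, hlN⟩ := hj
        rw [(hJB a b l hab hbN hl1 hlN).1, hμJB a b l hab hbN hl1 hlN]
      · -- M J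
        obtain ⟨hab, hbN⟩ := hi; obtain ⟨hde, heN⟩ := hj
        by_cases hpq : a = d ∧ b = e
        · obtain ⟨rfl, rfl⟩ := hpq
          rw [hχskew (J a b) (M a b), hJMsame a b hab hbN, ← lie_skew, map_neg,
            hμJMs a b hab hbN]
        · have hne : (a, b) ≠ (d, e) := by
            intro hcon
            exact hpq ⟨congrArg Prod.fst hcon, congrArg Prod.snd hcon⟩
          rw [(hJJ a b d e hab hbN hde heN hne).2.2.2, ← lie_skew, map_neg,
            hμJM d e a b hde heN hab hbN hne.symm, neg_zero]
      · -- M M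
        obtain ⟨hab, hbN⟩ := hi; obtain ⟨hde, heN⟩ := hj
        by_cases hpq : a = d ∧ b = e
        · obtain ⟨rfl, rfl⟩ := hpq
          rw [halt, lie_self, map_zero]
        · have hne : (a, b) ≠ (d, e) := by
            intro hcon
            exact hpq ⟨congrArg Prod.fst hcon, congrArg Prod.snd hcon⟩
          rw [(hJJ a b d e hab hbN hde heN hne).2.1, hμMM a b d e hab hbN hde heN]
      · -- M B
        obtain ⟨hab, hbN⟩ := hi; obtain ⟨hl1, hlN⟩ := hj
        rw [(hJB a b l hab hbN hl1 hlN).2, hμMB a b l hab hbN hl1 hlN]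
      · -- B J
        obtain ⟨hk1, hkN⟩ := hi; obtain ⟨hde, heN⟩ := hj
        rw [hχskew (J d e) (B k), (hJB d e k hde heN hk1 hkN).1, neg_zero,
          ← lie_skew, map_neg, hμJB d e k hde heN hk1 hkN, neg_zero]
      · -- B M
        obtain ⟨hk1, hkN⟩ := hi; obtain ⟨hde, heN⟩ := hj
        rw [hχskew (M d e) (B k), (hJB d e k hde heN hk1 hkN).2, neg_zero,
          ← lie_skew, map_neg, hμMB d e k hde heN hk1 hkN, neg_zero]
      · -- B B
        obtain ⟨hk1, hkN⟩ := hi; obtain ⟨hl1, hlN⟩ := hj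
        rcases lt_trichotomy k l with h | h | h
        · rw [hBB k l hk1 h hlN, hβ0 k l hk1 h hlN, hbr.bb k l hk1 h hlN, map_zero]
        · subst h; rw [halt, lie_self, map_zero]
        · rw [hχskew (B l) (B k), hBB l k hl1 h hkN, hβ0 l k hl1 h hkN, neg_zero,
            ← lie_skew, hbr.bb l k hl1 h hkN, neg_zero, map_zero]
    have key : χ = Φ := bas.ext fun i => bas.ext fun j => hpair i j
    exact ⟨μ, fun x y => by rw [key]; rfl⟩

end
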